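/- arXiv:2307.06079 — 3 statements merged into one kernel-verified Lean document; each statement's English description precedes it below -/
import Mathlib

section
/- The minimum nonzero Lee weight of an element of the ideal p^i(ZMod (p^s)), for 0 ≤ i ≤ s-1, is p^i. -/
/-!
If `d` is a proper divisor of `m`, then `d` divides both `x.val` and `m - x.val` for every nonzero
multiple `x` of `d` in `ZMod m`, so both are at least `d`. Conversely `d` itself has Lee weight `d`,
because `m - d ≥ d`.
-/

/-- Lee weight of an element of `ZMod m`. -/
def leeWt (m : ℕ) (x : ZMod m) : ℕ := min x.val (m - x.val)

theorem Nat.two_mul_le_of_dvd_of_lt {m d : ℕ} (hdm : d ∣ m) (hlt : d < m) : 2 * d ≤ m := by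
  obtain ⟨k, rfl⟩ := hdm
  rcases k with _ | _ | k
  · simp at hlt
  · simp at hlt
  · nlinarith

namespace ZMod

theorem dvd_val_natCast_mul {m d : ℕ} (hdm : d ∣ m) (y : ZMod m) : d ∣ ((d : ZMod m) * y).val := by
  rw [val_mul, val_natCast, Nat.dvd_mod_iff hdm]
  exact dvd_mul_of_dvd_left ((Nat.dvd_mod_iff hdm).2 dvd_rfl) _

theorem le_leeWt_of_dvd_val {m d : ℕ} [NeZero m] (hdm : d ∣ m) {x : ZMod m} (hx : x ≠ 0)
    (hdx : d ∣ x.val) : d ≤ leeWt m x := by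
  have hpos : 0 < x.val := val_pos.2 hx
  have hlt : x.val < m := val_lt x
  exact le_min (Nat.le_of_dvd hpos hdx) (Nat.le_of_dvd (by omega) (Nat.dvd_sub hdm hdx))

theorem leeWt_natCast_of_two_mul_le {m d : ℕ} (h : 2 * d ≤ m) (hd : 0 < d) :
    leeWt m d = d := by
  rw [leeWt, val_cast_of_lt (by omega)]
  exact min_eq_left (by omega)

theorem isLeast_leeWt_natCast_mul {m d : ℕ} (hdm : d ∣ m) (hlt : d < m) :
    IsLeast {w : ℕ | ∃ x : ZMod m, x ≠ 0 ∧ (∃ y : ZMod m, x = d * y) ∧ w = leeWt m x} d := by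
  have hd : 0 < d := Nat.pos_of_dvd_of_pos hdm (by omega)
  have : NeZero m := ⟨by omega⟩
  have hd_ne_zero : (d : ZMod m) ≠ 0 := by
    rw [Ne, natCast_eq_zero_iff]
    exact fun hmd => (Nat.le_of_dvd hd hmd).not_gt hlt
  have hwt : leeWt m d = d := leeWt_natCast_of_two_mul_le (Nat.two_mul_le_of_dvd_of_lt hdm hlt) hd
  refine ⟨⟨d, hd_ne_zero, ⟨1, (mul_one _).symm⟩, hwt.symm⟩, ?_⟩
  rintro w ⟨x, hx, ⟨y, rfl⟩, rfl⟩
  exact le_leeWt_of_dvd_val hdm hx (dvd_val_natCast_mul hdm y)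

end ZMod

theorem min_nonzero_lee_weight_ideal (p s i : ℕ) (hp : p.Prime) (hs : 0 < s)
    (hi : i ≤ s - 1) :
    IsLeast {w : ℕ | ∃ x : ZMod (p ^ s), x ≠ 0 ∧
        (∃ y : ZMod (p ^ s), x = (p : ZMod (p ^ s)) ^ i * y) ∧ w = leeWt (p ^ s) x}
      (p ^ i) := by
  have hlt : p ^ i < p ^ s := Nat.pow_lt_pow_right hp.one_lt (by omega)
  simpa only [Nat.cast_pow] using ZMod.isLeast_leeWt_natCast_mul (pow_dvd_pow p (by omega)) hlt
end

section
/- Let C ⊆ (ZMod (p^s))^n be a ZMod (p^s)-submodule with |C| = p^{s·k} for a rational number k (the ZMod(p^s)-dimension). Then the minimum Hamming distance of C satisfies d_H(C) ≤ n - ⌈k⌉ + 1. -/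
/-- Hamming weight of a vector: the number of nonzero coordinates. -/
def hammingWt (m n : ℕ) (x : Fin n → ZMod m) : ℕ :=
  (Finset.univ.filter (fun i => x i ≠ 0)).card

/-- The minimum Hamming distance of a code. -/
noncomputable def minHammingDist (m n : ℕ) (D : Set (Fin n → ZMod m)) : ℕ :=
  sInf {w : ℕ | ∃ c ∈ D, c ≠ 0 ∧ w = hammingWt m n c}

/-!
Singleton bound: if every nonzero codeword has weight at least `d`, two codewords that agree
outside some `d - 1` coordinates are equal, so restricting to the remaining `n - d + 1`
coordinates is injective on `C`; hence `p ^ (s k) = |C| ≤ (p ^ s) ^ (n - d + 1)`, i.e.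
`k ≤ n - d + 1`.
-/

open Finset

lemma minHammingDist_le_hammingWt {m n : ℕ} {D : Set (Fin n → ZMod m)} {c : Fin n → ZMod m}
    (hc : c ∈ D) (hc0 : c ≠ 0) : minHammingDist m n D ≤ hammingWt m n c :=
  Nat.sInf_le ⟨c, hc, hc0, rfl⟩

lemma minHammingDist_le (m n : ℕ) (D : Set (Fin n → ZMod m)) : minHammingDist m n D ≤ n := by
  rcases Set.eq_empty_or_nonempty {w : ℕ | ∃ c ∈ D, c ≠ 0 ∧ w = hammingWt m n c} with h | h
  · simp [minHammingDist, h]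
  · obtain ⟨_, c, hc, hc0, rfl⟩ := h
    calc minHammingDist m n D ≤ hammingWt m n c := minHammingDist_le_hammingWt hc hc0
      _ ≤ Fintype.card (Fin n) := hammingNorm_le_card_fintype
      _ = n := Fintype.card_fin n

namespace AddSubgroup

variable {ι G : Type*} [Fintype ι] [DecidableEq ι] [AddCommGroup G] [Fintype G] [DecidableEq G]

lemma card_le_card_pow_of_card_compl_lt_hammingNorm (C : AddSubgroup (ι → G)) (S : Finset ι)
    (hS : ∀ c ∈ C, c ≠ 0 → #Sᶜ < hammingNorm c) :
    Nat.card C ≤ Fintype.card G ^ #S := by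
  let restrict : C → (S → G) := fun c i => (c : ι → G) i
  have hinj : Function.Injective restrict := by
    intro a b hab
    by_contra hne
    have hsub : (a : ι → G) - b ≠ 0 := sub_ne_zero.mpr (Subtype.coe_injective.ne hne)
    have hsupp : ({i | ((a : ι → G) - b) i ≠ 0} : Finset ι) ⊆ Sᶜ :=
      fun i hi => mem_compl.mpr fun hiS =>
        (mem_filter.mp hi).2 (sub_eq_zero.mpr (congrFun hab ⟨i, hiS⟩))
    exact (hS _ (C.sub_mem a.2 b.2) hsub).not_ge (card_le_card hsupp)
  calc Nat.card C ≤ Nat.card (S → G) := Nat.card_le_card_of_injective restrict hinj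
    _ = Fintype.card G ^ #S := by simp [Nat.card_eq_fintype_card]

theorem card_le_card_pow_of_le_hammingNorm (C : AddSubgroup (ι → G)) {d : ℕ}
    (hd : d ≤ Fintype.card ι + 1) (hC : ∀ c ∈ C, c ≠ 0 → d ≤ hammingNorm c) :
    Nat.card C ≤ Fintype.card G ^ (Fintype.card ι + 1 - d) := by
  obtain ⟨T, -, hT⟩ := exists_subset_card_eq (s := (univ : Finset ι)) (n := d - 1)
    (by rw [card_univ]; omega)
  have hTc : ∀ c ∈ C, c ≠ 0 → #Tᶜᶜ < hammingNorm c := fun c hc hc0 => by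
    have := hammingNorm_pos_iff.mpr hc0
    have := hC c hc hc0
    rw [compl_compl]
    omega
  calc Nat.card C ≤ Fintype.card G ^ #Tᶜ := card_le_card_pow_of_card_compl_lt_hammingNorm C _ hTc
    _ ≤ Fintype.card G ^ (Fintype.card ι + 1 - d) :=
      Nat.pow_le_pow_right Fintype.card_pos (by rw [card_compl]; omega)

end AddSubgroup

theorem hamming_singleton_bound_ring_general (p s n : ℕ) (hp : p.Prime) (hs : 0 < s)
    (C : Submodule (ZMod (p ^ s)) (Fin n → ZMod (p ^ s))) (k : ℚ)
    (hcard : (Nat.card C : ℝ) = (p : ℝ) ^ ((s : ℝ) * (k : ℝ))) :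
    (minHammingDist (p ^ s) n (C : Set (Fin n → ZMod (p ^ s))) : ℤ) ≤ (n : ℤ) - ⌈k⌉ + 1 := by
  have : NeZero (p ^ s) := ⟨pow_ne_zero _ hp.ne_zero⟩
  set d := minHammingDist (p ^ s) n (C : Set (Fin n → ZMod (p ^ s)))
  have hdn : d ≤ n := minHammingDist_le _ _ _
  have hbound : Nat.card C ≤ (p ^ s) ^ (n + 1 - d) := by
    simpa [ZMod.card] using C.toAddSubgroup.card_le_card_pow_of_le_hammingNorm (d := d)
      (by rw [Fintype.card_fin]; omega) fun c hc hc0 => minHammingDist_le_hammingWt hc hc0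
  have hrpow : (p : ℝ) ^ ((s : ℝ) * k) ≤ (p : ℝ) ^ ((s : ℝ) * ((n + 1 - d : ℕ) : ℝ)) := by
    rw [← hcard, ← Nat.cast_mul, Real.rpow_natCast, pow_mul]
    exact_mod_cast hbound
  have hk : (k : ℝ) ≤ ((n + 1 - d : ℕ) : ℝ) :=
    le_of_mul_le_mul_left ((Real.rpow_le_rpow_left_iff (by exact_mod_cast hp.one_lt)).mp hrpow)
      (by exact_mod_cast hs)
  have hceil : ⌈k⌉ ≤ ((n + 1 - d : ℕ) : ℤ) := Int.ceil_le.mpr (by exact_mod_cast hk)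
  omega

theorem hamming_singleton_bound_ring (p s n : ℕ) (hp : p.Prime) (hs : 0 < s) (hn : 0 < n)
    (C : Submodule (ZMod (p ^ s)) (Fin n → ZMod (p ^ s))) (hC : C ≠ ⊥) (k : ℚ)
    (hcard : (Nat.card C : ℝ) = (p : ℝ) ^ ((s : ℝ) * (k : ℝ))) :
    (minHammingDist (p ^ s) n (C : Set (Fin n → ZMod (p ^ s))) : ℤ) ≤ (n : ℤ) - ⌈k⌉ + 1 :=
  hamming_singleton_bound_ring_general p s n hp hs C k hcard
end

section
/- Let C ⊆ (ZMod (p^s))^n be a nonzero ZMod (p^s)-submodule. Then the minimum Lee distance of C satisfies ⌊(d_L(C) - 1)/M⌋ ≤ n - k, where M = ⌊p^s/2⌋ and k = log_{p^s}(|C|). (Shiromoto's Lee-metric Singleton bound.) -/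
/-- Lee weight of a vector over `ZMod m`. -/
def leeWtVec (m n : ℕ) (x : Fin n → ZMod m) : ℕ := ∑ i, leeWt m (x i)

/-- The minimum Lee distance of a code. -/
noncomputable def minLeeDist (m n : ℕ) (D : Set (Fin n → ZMod m)) : ℕ :=
  sInf {w : ℕ | ∃ c ∈ D, c ≠ 0 ∧ w = leeWtVec m n c}

open Finset

section LeeWeight

variable {m n : ℕ}

@[simp]
lemma leeWt_zero : leeWt m 0 = 0 := by
  simp [leeWt]

lemma leeWt_le_half [NeZero m] (x : ZMod m) : leeWt m x ≤ m / 2 := by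
  have := x.val_lt
  unfold leeWt
  omega

lemma leeWt_pos [NeZero m] {x : ZMod m} (hx : x ≠ 0) : 0 < leeWt m x := by
  have := x.val_lt
  have := (ZMod.val_ne_zero x).mpr hx
  unfold leeWt
  omega

lemma leeWtVec_pos [NeZero m] {x : Fin n → ZMod m} (hx : x ≠ 0) : 0 < leeWtVec m n x := by
  obtain ⟨i, hi⟩ := Function.ne_iff.mp hx
  exact (leeWt_pos hi).trans_le
    (single_le_sum (f := fun j => leeWt m (x j)) (fun _ _ => Nat.zero_le _) (mem_univ i))

lemma leeWtVec_le_card_mul_of_eq_zero [NeZero m] {x : Fin n → ZMod m} (s : Finset (Fin n))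
    (hx : ∀ i ∉ s, x i = 0) : leeWtVec m n x ≤ #s * (m / 2) := by
  calc leeWtVec m n x = ∑ i ∈ s, leeWt m (x i) :=
        (sum_subset (subset_univ s) fun i _ hi => by rw [hx i hi, leeWt_zero]).symm
    _ ≤ #s * (m / 2) := sum_le_card_nsmul s _ _ fun i _ => leeWt_le_half (x i)

end LeeWeight

section MinLeeDist

variable {m n : ℕ}

lemma minLeeDist_le {D : Set (Fin n → ZMod m)} {c : Fin n → ZMod m} (hc : c ∈ D) (h0 : c ≠ 0) :
    minLeeDist m n D ≤ leeWtVec m n c :=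
  Nat.sInf_le ⟨c, hc, h0, rfl⟩

lemma exists_leeWtVec_eq_minLeeDist {D : Set (Fin n → ZMod m)} (hD : ∃ c ∈ D, c ≠ 0) :
    ∃ c ∈ D, c ≠ 0 ∧ leeWtVec m n c = minLeeDist m n D := by
  obtain ⟨c, hc, h0⟩ := hD
  have hne : {w | ∃ c ∈ D, c ≠ 0 ∧ w = leeWtVec m n c}.Nonempty := ⟨_, c, hc, h0, rfl⟩
  obtain ⟨c, hc, h0, hw⟩ := Nat.sInf_mem hne
  exact ⟨c, hc, h0, hw.symm⟩

variable [NeZero m] {C : Submodule (ZMod m) (Fin n → ZMod m)}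

lemma minLeeDist_pos (hC : C ≠ ⊥) : 0 < minLeeDist m n C := by
  obtain ⟨c, -, h0, hw⟩ := exists_leeWtVec_eq_minLeeDist (C.exists_mem_ne_zero_of_ne_bot hC)
  exact hw ▸ leeWtVec_pos h0

lemma minLeeDist_le_mul_half (hC : C ≠ ⊥) : minLeeDist m n C ≤ n * (m / 2) := by
  obtain ⟨c, -, -, hw⟩ := exists_leeWtVec_eq_minLeeDist (C.exists_mem_ne_zero_of_ne_bot hC)
  simpa [← hw] using leeWtVec_le_card_mul_of_eq_zero (x := c) univ (by simp)

/-- A codeword vanishing off `s` is too light to be nonzero, so a codeword is determined by its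
coordinates outside `s`. -/
theorem card_le_pow_of_card_mul_half_lt_minLeeDist (s : Finset (Fin n))
    (hs : #s * (m / 2) < minLeeDist m n C) : Nat.card C ≤ m ^ (n - #s) := by
  have hinj : Function.Injective fun (c : C) (i : {i // i ∉ s}) => (c : Fin n → ZMod m) i := by
    intro a b hab
    by_contra hne
    have h0 : (a - b : Fin n → ZMod m) ≠ 0 := sub_ne_zero.mpr (Subtype.coe_injective.ne hne)
    have hoff : ∀ i ∉ s, (a - b : Fin n → ZMod m) i = 0 := fun i hi =>
      sub_eq_zero.mpr (congrFun hab ⟨i, hi⟩)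
    have := (minLeeDist_le (C.sub_mem a.2 b.2) h0).trans (leeWtVec_le_card_mul_of_eq_zero s hoff)
    omega
  calc Nat.card C ≤ Nat.card ({i // i ∉ s} → ZMod m) := Nat.card_le_card_of_injective _ hinj
    _ = m ^ (n - #s) := by
      simp [Nat.card_eq_fintype_card, Fintype.card_subtype_compl]

theorem card_mul_pow_minLeeDist_le_pow (hC : C ≠ ⊥) :
    Nat.card C * m ^ ((minLeeDist m n C - 1) / (m / 2)) ≤ m ^ n := by
  set t := (minLeeDist m n C - 1) / (m / 2)
  have hd := minLeeDist_pos hC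
  have htM : t * (m / 2) < minLeeDist m n C := by
    have : t * (m / 2) ≤ minLeeDist m n C - 1 := Nat.div_mul_le_self _ _
    omega
  have htn : t ≤ n := (Nat.lt_of_mul_lt_mul_right (htM.trans_le (minLeeDist_le_mul_half hC))).le
  obtain ⟨s, -, hs⟩ := exists_subset_card_eq (s := (univ : Finset (Fin n))) (by simpa using htn)
  calc Nat.card C * m ^ t ≤ m ^ (n - t) * m ^ t := by
        gcongr
        exact hs ▸ card_le_pow_of_card_mul_half_lt_minLeeDist s (hs ▸ htM)
    _ = m ^ n := by rw [← pow_add, Nat.sub_add_cancel htn]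

end MinLeeDist

theorem shiromoto_lee_singleton_bound_general (p s n : ℕ) (hp : p.Prime) (hs : 0 < s)
    (C : Submodule (ZMod (p ^ s)) (Fin n → ZMod (p ^ s))) (hC : C ≠ ⊥) (k : ℚ)
    (hcard : (Nat.card C : ℝ) = (p : ℝ) ^ ((s : ℝ) * (k : ℝ))) :
    (⌊((minLeeDist (p ^ s) n (C : Set (Fin n → ZMod (p ^ s))) : ℚ) - 1) /
        ((p ^ s / 2 : ℕ) : ℚ)⌋ : ℚ) ≤ (n : ℚ) - k := by
  have : NeZero (p ^ s) := ⟨pow_ne_zero s hp.ne_zero⟩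
  set t := (minLeeDist (p ^ s) n C - 1) / (p ^ s / 2)
  have hfloor : ⌊((minLeeDist (p ^ s) n C : ℚ) - 1) / ((p ^ s / 2 : ℕ) : ℚ)⌋ = t := by
    rw [← Nat.cast_one, ← Nat.cast_sub (minLeeDist_pos hC), Rat.floor_natCast_div_natCast]
    exact (Int.natCast_div _ _).symm
  have hsing : (p : ℝ) ^ ((s : ℝ) * k + s * t) ≤ (p : ℝ) ^ ((s : ℝ) * n) := by
    have hp0 : (0 : ℝ) < p := by exact_mod_cast hp.pos
    rw [Real.rpow_add hp0, ← hcard, Real.rpow_natCast_mul hp0.le, Real.rpow_natCast_mul hp0.le,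
      Real.rpow_natCast, Real.rpow_natCast]
    exact_mod_cast card_mul_pow_minLeeDist_le_pow hC
  have hkt : (s : ℝ) * (k + t) ≤ s * n := by
    rw [mul_add]
    exact (Real.rpow_le_rpow_left_iff (by exact_mod_cast hp.one_lt)).mp hsing
  have : k + t ≤ n := by exact_mod_cast le_of_mul_le_mul_left hkt (by exact_mod_cast hs)
  rw [hfloor]
  push_cast
  linarith

theorem shiromoto_lee_singleton_bound (p s n : ℕ) (hp : p.Prime) (hs : 0 < s) (hn : 0 < n)
    (C : Submodule (ZMod (p ^ s)) (Fin n → ZMod (p ^ s))) (hC : C ≠ ⊥) (k : ℚ)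
    (hcard : (Nat.card C : ℝ) = (p : ℝ) ^ ((s : ℝ) * (k : ℝ))) :
    (⌊((minLeeDist (p ^ s) n (C : Set (Fin n → ZMod (p ^ s))) : ℚ) - 1) /
        ((p ^ s / 2 : ℕ) : ℚ)⌋ : ℚ) ≤ (n : ℚ) - k :=
  shiromoto_lee_singleton_bound_general p s n hp hs C hC k hcard
end
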